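/- arXiv:0805.3283 — 5 statements merged into one kernel-verified Lean document; each statement's English description precedes it below -/
import Mathlib

section
/- Let ε∈(0,1], ζ=(1+ε)/2, and let f,g∈L¹₃(ℝ³) be nonnegative. Set h=f−g and ψ(v)=sgn(h(v))⟨v⟩² (with sgn(0)=0). Then (1/2)∫_{ℝ³}∫_{ℝ³}( f(v)f(w) − g(v)g(w) ) |v−w| A_ζ[ψ](v,w) dv dw ≤ ‖f+g‖_{L¹₃} ‖f−g‖_{L¹₂}. -/
open MeasureTheory Real Metric Filter Set
open scoped RealInnerProductSpace Topology ENNReal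
noncomputable section

/-- The velocity space ℝ³. -/
abbrev V : Type := EuclideanSpace ℝ (Fin 3)

/-- Surface measure on the unit sphere S² ⊂ ℝ³ (total mass 4π). -/
def S2 : Measure (sphere (0:V) 1) := (volume : Measure V).toSphere

/-- The weight ⟨v⟩ = √(1+|v|²). -/
def jap (v : V) : ℝ := Real.sqrt (1 + ‖v‖^2)

/-- The weighted L¹ norm ‖f‖_{L¹_η} = ∫ |f(v)| ⟨v⟩^η dv. -/
def L1norm (f : V → ℝ) (η : ℝ) : ℝ := ∫ v : V, |f v| * (jap v)^η

/-- The weighted Lᵖ norm ‖f‖_{L^p_η} = (∫ |f(v)|^p ⟨v⟩^{pη} dv)^{1/p}. -/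
def Lpnorm (f : V → ℝ) (p η : ℝ) : ℝ := (∫ v : V, |f v|^p * (jap v)^(p*η)) ^ (1/p)

/-- Membership f ∈ L¹_η(ℝ³). -/
def MemL1w (f : V → ℝ) (η : ℝ) : Prop :=
  Integrable (fun v : V => |f v| * (jap v)^η)

/-- Membership f ∈ L^p_η(ℝ³). -/
def MemLpw (f : V → ℝ) (p η : ℝ) : Prop :=
  Integrable (fun v : V => |f v|^p * (jap v)^(p*η))

/-- A_ζ[ψ](v,w) = (1/4π) ∫_{S²} (ψ(v')+ψ(w')−ψ(v)−ψ(w)) dσ, with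
v' = v + (ζ/2)(|q|σ−q), w' = w − (ζ/2)(|q|σ−q), q = v−w. -/
def Aop (ζ : ℝ) (ψ : V → ℝ) (v w : V) : ℝ :=
  (4*π)⁻¹ * ∫ (σ : sphere (0:V) 1),
    (ψ (v + (ζ/2) • (‖v - w‖ • (σ:V) - (v - w)))
      + ψ (w - (ζ/2) • (‖v - w‖ • (σ:V) - (v - w))) - ψ v - ψ w) ∂S2

/-- J_e[ψ](v,w) = (1/4π) ∫_{S²} (ψ(ṽ*)−ψ(v)) dσ where ṽ* = v − κ(q−|q|σ), q = v−w. -/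
def Jop (κ : ℝ) (ψ : V → ℝ) (v w : V) : ℝ :=
  (4*π)⁻¹ * ∫ (σ : sphere (0:V) 1),
    (ψ (v - κ • ((v - w) - ‖v - w‖ • (σ:V))) - ψ v) ∂S2

/-- The gain part 𝒬⁺(f,f) of the inelastic Boltzmann operator with restitution
coefficient ε; with ζ = (1+ε)/2 and q = v−w,
'v = v + (ζ/2ε)(|q|σ−q) and 'w = w − (ζ/2ε)(|q|σ−q). -/
def Qplus (ε : ℝ) (f : V → ℝ) (v : V) : ℝ :=
  (4*π*ε^2)⁻¹ * ∫ w : V, (∫ (σ : sphere (0:V) 1),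
      ‖v - w‖ * f (v + ((1+ε)/(4*ε)) • (‖v - w‖ • (σ:V) - (v - w)))
        * f (w - ((1+ε)/(4*ε)) • (‖v - w‖ • (σ:V) - (v - w))) ∂S2)

/-- The loss part 𝒬⁻(f,f)(v) = f(v) ∫ |v−w| f(w) dw. -/
def Qminus (f : V → ℝ) (v : V) : ℝ := f v * ∫ w : V, ‖v - w‖ * f w

/-- The gain part ℒ⁺ of the linear scattering operator with host distribution F1,
mean free path lam, mass ratio α = m₁/(1+m₁) and inelasticity β = (1−e)/2;
with q = v−w, γ = α(1−β)/(1−2β) = α(1+e)/(2e), γ̄ = (1−α)(1−β)/(1−2β) = (1−α)(1+e)/(2e),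
ṽ⋆ = v − γ(q−|q|σ), w̃⋆ = w + γ̄(q−|q|σ). -/
def Lplus (m₁ lam e : ℝ) (F1 f : V → ℝ) (v : V) : ℝ :=
  (4*π*lam*e^2)⁻¹ * ∫ w : V, (∫ (σ : sphere (0:V) 1),
      ‖v - w‖ * f (v - ((m₁/(1+m₁)) * (1+e)/(2*e)) • ((v - w) - ‖v - w‖ • (σ:V)))
        * F1 (w + ((1/(1+m₁)) * (1+e)/(2*e)) • ((v - w) - ‖v - w‖ • (σ:V))) ∂S2)

/-- The collision frequency ν(v) = (1/λ) ∫ |v−w| F₁(w) dw. -/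
def nufreq (lam : ℝ) (F1 : V → ℝ) (v : V) : ℝ := lam⁻¹ * ∫ w : V, ‖v - w‖ * F1 w

/-! Write `f(v)f(w) − g(v)g(w) = ½[h(v)(f+g)(w) + (f+g)(v)h(w)]` with `h = f − g`.
For every `σ`, `h(v)` times the integrand of `A_ζ[ψ](v,w)` is at most `2|h(v)|⟨w⟩²`: indeed
`h(v)ψ(v) = |h(v)|⟨v⟩²`, `|ψ| ≤ ⟨·⟩²`, and for `ζ ∈ [0,1]` collisions dissipate energy,
`⟨v'⟩² + ⟨w'⟩² ≤ ⟨v⟩² + ⟨w⟩²`; symmetrically with `v` and `w` exchanged. Together with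
`|v − w| ≤ ⟨v⟩⟨w⟩` this bounds the integrand by `a(v)b(w) + b(v)a(w)` with `a = |h|⟨·⟩²`,
`b = (f+g)⟨·⟩³`, whose double integral is `2‖f−g‖_{L¹₂}‖f+g‖_{L¹₃}`. -/

lemma integral_le_integral_of_ae_le_of_nonneg {α : Type*} [MeasurableSpace α] {μ : Measure α}
    {f g : α → ℝ} (hfg : f ≤ᵐ[μ] g) (hg0 : 0 ≤ᵐ[μ] g) (hg : Integrable g μ) :
    ∫ x, f x ∂μ ≤ ∫ x, g x ∂μ := by
  by_cases hf : Integrable f μ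
  · exact integral_mono_ae hf hg hfg
  · rw [integral_undef hf]
    exact integral_nonneg_of_ae hg0

lemma integral_integral_le_of_le_add_mul {α : Type*} [MeasurableSpace α] {μ : Measure α}
    {G : α → α → ℝ} {a b : α → ℝ} (ha0 : 0 ≤ a) (hb0 : 0 ≤ b)
    (ha : Integrable a μ) (hb : Integrable b μ)
    (hG : ∀ x y, G x y ≤ a x * b y + b x * a y) :
    ∫ x, ∫ y, G x y ∂μ ∂μ ≤ 2 * ((∫ x, a x ∂μ) * ∫ x, b x ∂μ) := by
  have inner (x : α) :
      ∫ y, G x y ∂μ ≤ a x * (∫ y, b y ∂μ) + b x * ∫ y, a y ∂μ := by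
    rw [← integral_const_mul, ← integral_const_mul,
      ← integral_add (hb.const_mul _) (ha.const_mul _)]
    exact integral_le_integral_of_ae_le_of_nonneg (.of_forall (hG x))
      (.of_forall fun y => add_nonneg (mul_nonneg (ha0 x) (hb0 y)) (mul_nonneg (hb0 x) (ha0 y)))
      ((hb.const_mul _).add (ha.const_mul _))
  calc ∫ x, ∫ y, G x y ∂μ ∂μ
      ≤ ∫ x, (a x * (∫ y, b y ∂μ) + b x * ∫ y, a y ∂μ) ∂μ :=
        integral_le_integral_of_ae_le_of_nonneg (.of_forall inner)
          (.of_forall fun x => add_nonneg (mul_nonneg (ha0 x) (integral_nonneg hb0))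
            (mul_nonneg (hb0 x) (integral_nonneg ha0)))
          ((ha.mul_const _).add (hb.mul_const _))
    _ = 2 * ((∫ x, a x ∂μ) * ∫ x, b x ∂μ) := by
        rw [integral_add (ha.mul_const _) (hb.mul_const _), integral_mul_const,
          integral_mul_const]
        ring

lemma Real.mul_sign_self (x : ℝ) : x * Real.sign x = |x| := by
  rcases lt_trichotomy x 0 with hx | rfl | hx
  · rw [Real.sign_of_neg hx, abs_of_neg hx]; ring
  · simp
  · rw [Real.sign_of_pos hx, abs_of_pos hx]; ring

lemma Real.abs_sign_le_one (x : ℝ) : |Real.sign x| ≤ 1 := by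
  rcases Real.sign_apply_eq x with h | h | h <;> simp [h]

section Collision

variable {E : Type*} [NormedAddCommGroup E] [InnerProductSpace ℝ E]

/-- `Δ` in the paper's post-collisional velocities `v' = v + Δ`, `w' = w - Δ`. -/
def momentumTransfer (ζ : ℝ) (v w σ : E) : E := (ζ / 2) • (‖v - w‖ • σ - (v - w))

lemma norm_add_sq_add_norm_sub_sq_momentumTransfer (ζ : ℝ) (v w σ : E) (hσ : ‖σ‖ = 1) :
    ‖v + momentumTransfer ζ v w σ‖ ^ 2 + ‖w - momentumTransfer ζ v w σ‖ ^ 2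
      = ‖v‖ ^ 2 + ‖w‖ ^ 2 - ζ * (1 - ζ) / 2 * ‖‖v - w‖ • σ - (v - w)‖ ^ 2 := by
  set d := ‖v - w‖ • σ - (v - w)
  -- `(v - w) + d = ‖v - w‖ • σ` has the same length as `v - w`
  have hqd : 2 * ⟪v - w, d⟫ = -‖d‖ ^ 2 := by
    have h : ‖(v - w) + d‖ ^ 2 = ‖v - w‖ ^ 2 := by
      rw [add_sub_cancel, norm_smul, norm_norm, hσ, mul_one]
    rw [norm_add_sq_real] at h
    linarith
  rw [momentumTransfer, norm_add_sq_real, norm_sub_sq_real, norm_smul, mul_pow,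
    Real.norm_eq_abs, sq_abs, real_inner_smul_right, real_inner_smul_right]
  have : ⟪v, d⟫ - ⟪w, d⟫ = ⟪v - w, d⟫ := (inner_sub_left v w d).symm
  linear_combination (ζ / 2) * hqd + ζ * this

lemma norm_add_sq_add_norm_sub_sq_momentumTransfer_le {ζ : ℝ} (h0 : 0 ≤ ζ) (h1 : ζ ≤ 1)
    (v w σ : E) (hσ : ‖σ‖ = 1) :
    ‖v + momentumTransfer ζ v w σ‖ ^ 2 + ‖w - momentumTransfer ζ v w σ‖ ^ 2
      ≤ ‖v‖ ^ 2 + ‖w‖ ^ 2 := by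
  rw [norm_add_sq_add_norm_sub_sq_momentumTransfer ζ v w σ hσ]
  have : 0 ≤ ζ * (1 - ζ) / 2 * ‖‖v - w‖ • σ - (v - w)‖ ^ 2 := by
    have := sub_nonneg.2 h1; positivity
  linarith

end Collision

lemma jap_sq (v : V) : jap v ^ 2 = 1 + ‖v‖ ^ 2 := Real.sq_sqrt (by positivity)

lemma jap_nonneg (v : V) : 0 ≤ jap v := Real.sqrt_nonneg _

lemma one_le_jap (v : V) : 1 ≤ jap v := Real.le_sqrt_of_sq_le (by nlinarith [sq_nonneg ‖v‖])

lemma continuous_jap : Continuous jap := by unfold jap; fun_prop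

lemma norm_sub_le_jap_mul_jap (v w : V) : ‖v - w‖ ≤ jap v * jap w :=
  calc ‖v - w‖ ≤ ‖v‖ + ‖w‖ := norm_sub_le v w
    _ ≤ jap v * jap w := by
      rw [jap, jap, ← Real.sqrt_mul (by positivity)]
      exact Real.le_sqrt_of_sq_le (by nlinarith [sq_nonneg (‖v‖ * ‖w‖ - 1)])

lemma norm_sub_mul_jap_sq_le (v w : V) : ‖v - w‖ * jap w ^ 2 ≤ jap v ^ 2 * jap w ^ 3 := by
  have hv := one_le_jap v
  calc ‖v - w‖ * jap w ^ 2 ≤ jap v * jap w * jap w ^ 2 := by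
        gcongr; exact norm_sub_le_jap_mul_jap v w
    _ ≤ jap v ^ 2 * jap w ^ 3 := by
        have : jap v ≤ jap v ^ 2 := by nlinarith
        have := jap_nonneg w
        calc jap v * jap w * jap w ^ 2 = jap v * jap w ^ 3 := by ring
          _ ≤ jap v ^ 2 * jap w ^ 3 := by gcongr

lemma jap_sq_add_jap_sq_momentumTransfer_le {ζ : ℝ} (h0 : 0 ≤ ζ) (h1 : ζ ≤ 1)
    (v w σ : V) (hσ : ‖σ‖ = 1) :
    jap (v + momentumTransfer ζ v w σ) ^ 2 + jap (w - momentumTransfer ζ v w σ) ^ 2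
      ≤ jap v ^ 2 + jap w ^ 2 := by
  simp only [jap_sq]
  linarith [norm_add_sq_add_norm_sub_sq_momentumTransfer_le h0 h1 v w σ hσ]

instance : IsFiniteMeasure S2 := by unfold S2; infer_instance

lemma S2_real_univ : S2.real univ = 4 * π := by
  rw [S2, Measure.toSphere_real_apply_univ, finrank_euclideanSpace, Fintype.card_fin,
    measureReal_def, EuclideanSpace.volume_ball_fin_three]
  rw [ENNReal.ofReal_one, one_pow, one_mul, ENNReal.toReal_ofReal (by positivity)]
  ring

lemma mul_Aop_le {ζ s C : ℝ} {ψ : V → ℝ} {v w : V} (hC : 0 ≤ C)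
    (h : ∀ σ ∈ sphere (0 : V) 1,
      s * (ψ (v + momentumTransfer ζ v w σ) + ψ (w - momentumTransfer ζ v w σ) - ψ v - ψ w) ≤ C) :
    s * Aop ζ ψ v w ≤ C := by
  have hint : s * ∫ σ : sphere (0 : V) 1, (ψ (v + momentumTransfer ζ v w σ)
      + ψ (w - momentumTransfer ζ v w σ) - ψ v - ψ w) ∂S2 ≤ 4 * π * C := by
    rw [← integral_const_mul]
    calc _ ≤ ∫ _ : sphere (0 : V) 1, C ∂S2 :=
          integral_le_integral_of_ae_le_of_nonneg (.of_forall fun σ => h σ σ.2)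
            (.of_forall fun _ => hC) (integrable_const C)
      _ = 4 * π * C := by rw [integral_const, smul_eq_mul, S2_real_univ]
  rw [Aop, mul_left_comm]
  calc _ ≤ (4 * π)⁻¹ * (4 * π * C) := mul_le_mul_of_nonneg_left hint (by positivity)
    _ = C := by field_simp

lemma mul_add_sub_sub_le {s a b c d A B C D : ℝ} (ha : |a| ≤ A) (hb : |b| ≤ B) (hd : |d| ≤ D)
    (hc : s * c = |s| * C) (hABCD : A + B ≤ C + D) : s * (a + b - c - d) ≤ |s| * (2 * D) := by
  have weighted (x X : ℝ) (hx : |x| ≤ X) : |s * x| ≤ |s| * X := by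
    rw [abs_mul]; exact mul_le_mul_of_nonneg_left hx (abs_nonneg s)
  have := weighted a A ha
  have := weighted b B hb
  have := weighted d D hd
  have := mul_le_mul_of_nonneg_left hABCD (abs_nonneg s)
  linarith [le_abs_self (s * a), le_abs_self (s * b), neg_abs_le (s * d)]

lemma abs_sign_mul_le (x y : ℝ) (hy : 0 ≤ y) : |Real.sign x * y| ≤ y := by
  rw [abs_mul, abs_of_nonneg hy]
  exact mul_le_of_le_one_left hy (Real.abs_sign_le_one x)

lemma mul_sign_mul (x y : ℝ) : x * (Real.sign x * y) = |x| * y := by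
  rw [← mul_assoc, Real.mul_sign_self]

lemma mul_Aop_sign_mul_jap_sq_le_left {ζ : ℝ} (h0 : 0 ≤ ζ) (h1 : ζ ≤ 1) (h : V → ℝ)
    (v w : V) :
    h v * Aop ζ (fun u => Real.sign (h u) * jap u ^ 2) v w ≤ |h v| * (2 * jap w ^ 2) :=
  mul_Aop_le (by positivity) fun σ hσ =>
    mul_add_sub_sub_le (abs_sign_mul_le _ _ (sq_nonneg _)) (abs_sign_mul_le _ _ (sq_nonneg _))
      (abs_sign_mul_le _ _ (sq_nonneg _)) (mul_sign_mul _ _)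
      (jap_sq_add_jap_sq_momentumTransfer_le h0 h1 v w σ (norm_eq_of_mem_sphere ⟨σ, hσ⟩))

lemma mul_Aop_sign_mul_jap_sq_le_right {ζ : ℝ} (h0 : 0 ≤ ζ) (h1 : ζ ≤ 1) (h : V → ℝ)
    (v w : V) :
    h w * Aop ζ (fun u => Real.sign (h u) * jap u ^ 2) v w ≤ |h w| * (2 * jap v ^ 2) :=
  mul_Aop_le (by positivity) fun σ hσ => by
    have := mul_add_sub_sub_le (s := h w)
      (abs_sign_mul_le (h (w - momentumTransfer ζ v w σ)) _ (sq_nonneg _))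
      (abs_sign_mul_le (h (v + momentumTransfer ζ v w σ)) _ (sq_nonneg _))
      (abs_sign_mul_le (h v) _ (sq_nonneg _)) (mul_sign_mul _ _)
      ((add_comm _ _).trans_le <| (jap_sq_add_jap_sq_momentumTransfer_le h0 h1 v w σ
        (norm_eq_of_mem_sphere ⟨σ, hσ⟩)).trans_eq (add_comm _ _))
    linarith

lemma collision_integrand_le {ζ : ℝ} (h0 : 0 ≤ ζ) (h1 : ζ ≤ 1) {f g : V → ℝ}
    (hf : ∀ u, 0 ≤ f u) (hg : ∀ u, 0 ≤ g u) (v w : V) :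
    (f v * f w - g v * g w) * ‖v - w‖ *
        Aop ζ (fun u => Real.sign (f u - g u) * jap u ^ 2) v w
      ≤ |f v - g v| * jap v ^ 2 * ((f w + g w) * jap w ^ 3)
        + (f v + g v) * jap v ^ 3 * (|f w - g w| * jap w ^ 2) := by
  set A := Aop ζ (fun u => Real.sign (f u - g u) * jap u ^ 2) v w
  have hv : 0 ≤ f v + g v := add_nonneg (hf v) (hg v)
  have hw : 0 ≤ f w + g w := add_nonneg (hf w) (hg w)
  calc (f v * f w - g v * g w) * ‖v - w‖ * A
      = ‖v - w‖ / 2 * ((f w + g w) * ((f v - g v) * A) + (f v + g v) * ((f w - g w) * A)) := by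
        ring
    _ ≤ ‖v - w‖ / 2 * ((f w + g w) * (|f v - g v| * (2 * jap w ^ 2))
          + (f v + g v) * (|f w - g w| * (2 * jap v ^ 2))) := by
        gcongr ‖v - w‖ / 2 * ((f w + g w) * ?_ + (f v + g v) * ?_)
        · exact mul_Aop_sign_mul_jap_sq_le_left h0 h1 (fun u => f u - g u) v w
        · exact mul_Aop_sign_mul_jap_sq_le_right h0 h1 (fun u => f u - g u) v w
    _ = |f v - g v| * (f w + g w) * (‖v - w‖ * jap w ^ 2)
          + |f w - g w| * (f v + g v) * (‖w - v‖ * jap v ^ 2) := by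
        rw [norm_sub_rev w v]; ring
    _ ≤ |f v - g v| * (f w + g w) * (jap v ^ 2 * jap w ^ 3)
          + |f w - g w| * (f v + g v) * (jap w ^ 2 * jap v ^ 3) := by
        gcongr _ * ?_ + _ * ?_
        · exact norm_sub_mul_jap_sq_le v w
        · exact norm_sub_mul_jap_sq_le w v
    _ = _ := by ring

lemma integrable_abs_sub_mul_jap_sq {f g : V → ℝ} (hf : Measurable f) (hg : Measurable g)
    (hf0 : ∀ u, 0 ≤ f u) (hg0 : ∀ u, 0 ≤ g u) (h : Integrable fun u => (f u + g u) * jap u ^ 3) :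
    Integrable fun u => |f u - g u| * jap u ^ 2 := by
  refine h.mono' ?_ (.of_forall fun u => ?_)
  · exact ((hf.sub hg).abs.mul (continuous_jap.pow 2).measurable).aestronglyMeasurable
  · have hfg : |f u - g u| ≤ f u + g u := by
      rw [abs_sub_le_iff]; constructor <;> linarith [hf0 u, hg0 u]
    rw [Real.norm_of_nonneg (by positivity)]
    exact mul_le_mul hfg (pow_le_pow_right₀ (one_le_jap u) (by norm_num)) (by positivity)
      (add_nonneg (hf0 u) (hg0 u))

/-- Key estimate in the L¹-stability proof: with ψ(v) = sgn(f(v)−g(v))⟨v⟩²,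
(1/2)∬ (f(v)f(w) − g(v)g(w)) |v−w| A_ζ[ψ](v,w) dv dw ≤ ‖f+g‖_{L¹₃} ‖f−g‖_{L¹₂}. -/
theorem quadratic_stability_estimate (ε : ℝ) (hε : ε ∈ Set.Ioc (0:ℝ) 1)
    (f g : V → ℝ) (hfmeas : Measurable f) (hgmeas : Measurable g)
    (hfpos : ∀ v, 0 ≤ f v) (hgpos : ∀ v, 0 ≤ g v)
    (hf3 : MemL1w f 3) (hg3 : MemL1w g 3) :
    (1/2) * (∫ v : V, ∫ w : V, (f v * f w - g v * g w) * ‖v - w‖ *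
        Aop ((1+ε)/2) (fun u => Real.sign (f u - g u) * (jap u)^2) v w)
      ≤ L1norm (fun v => f v + g v) 3 * L1norm (fun v => f v - g v) 2 := by
  obtain ⟨hε0, hε1⟩ := hε
  have hb : Integrable fun u => (f u + g u) * jap u ^ 3 := (hf3.add hg3).congr <|
    .of_forall fun u => by
      simp only [Pi.add_apply, abs_of_nonneg (hfpos u), abs_of_nonneg (hgpos u), Real.rpow_ofNat]
      ring
  have key := integral_integral_le_of_le_add_mul (μ := volume)
    (fun u => mul_nonneg (abs_nonneg _) (sq_nonneg _))
    (fun u => mul_nonneg (add_nonneg (hfpos u) (hgpos u)) (pow_nonneg (jap_nonneg u) 3))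
    (integrable_abs_sub_mul_jap_sq hfmeas hgmeas hfpos hgpos hb) hb
    (collision_integrand_le (ζ := (1 + ε) / 2) (by linarith) (by linarith) hfpos hgpos)
  simp only [L1norm, abs_of_nonneg (add_nonneg (hfpos _) (hgpos _)), Real.rpow_ofNat]
  linarith
end
end

section
/- (Bobylev-type change of variables on the sphere.) Let q∈ℝ³, q≠0, set q̂=q/|q|, and let φ:ℝ³→ℝ be continuous. Then ∫_{S²} (q̂·n)₊ φ( ((q·n) n ) dn = (1/4) ∫_{S²} φ( (q−|q|σ)/2 ) dσ, where x₊=max(x,0) denotes the positive part. -/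
open MeasureTheory Real Metric Filter Set
open scoped RealInnerProductSpace Topology ENNReal
noncomputable section

/-!
Lift both sphere integrals to `ℝ³` against the radial weight `exp (-‖x‖)`; polar coordinates turn
each into the sphere integral times the nonzero constant `∫₀^∞ r² e^{-r} dr`. With `e = q / ‖q‖`
the map `T x = ‖x‖ e - 2 ⟪e, x⟫ x / ‖x‖` preserves norms, sends `x / ‖x‖ = n` to
`e - 2 ⟪e, n⟫ n = σ`, maps the half-space `0 < ⟪e, x⟫` injectively onto `ℝ³` minus the ray
`ℝ≥0 e`, and its derivative is `-2 ⟪e, n⟫ • id` plus a rank-two map, with determinant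
`-4 ⟪e, n⟫`. Changing variables `y = T x` in the lifted right-hand side therefore produces four
times the lifted left-hand side, because `(q - ‖q‖ σ) / 2 = ⟪q, n⟫ n`.
-/

section InnerProductSpace

variable {E : Type*} [NormedAddCommGroup E] [InnerProductSpace ℝ E]

theorem hasFDerivAt_norm_of_ne_zero {x : E} (hx : x ≠ 0) :
    HasFDerivAt (‖·‖) (innerSL ℝ (‖x‖⁻¹ • x)) x := by
  have hsq := (hasStrictFDerivAt_norm_sq x).hasFDerivAt.sqrt (by positivity)
  simp only [Real.sqrt_sq (norm_nonneg _)] at hsq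
  refine hsq.congr_fderiv ?_
  ext h
  simp
  field_simp

/-- The extension, homogeneous of degree one, of the map `n ↦ e - 2 ⟪e, n⟫ n` on the sphere
(the reflection of `e` in the plane `n⊥`). -/
def bobylevMap (e x : E) : E := ‖x‖ • e - (2 * ⟪e, x⟫ * ‖x‖⁻¹) • x

theorem norm_smul_sub_bobylevMap (e x : E) :
    ‖x‖ • e - bobylevMap e x = (2 * ⟪e, x⟫ * ‖x‖⁻¹) • x :=
  sub_sub_cancel _ _

theorem hasFDerivAt_bobylevMap (e : E) {x : E} (hx : x ≠ 0) :
    HasFDerivAt (bobylevMap e)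
      ((-2 * ⟪e, ‖x‖⁻¹ • x⟫) • ContinuousLinearMap.id ℝ E + (innerSL ℝ (‖x‖⁻¹ • x)).smulRight e
        + (innerSL ℝ (e - ⟪e, ‖x‖⁻¹ • x⟫ • ‖x‖⁻¹ • x)).smulRight ((-2 : ℝ) • ‖x‖⁻¹ • x)) x := by
  have hnorm := hasFDerivAt_norm_of_ne_zero hx
  have hinv := (hasDerivAt_inv (norm_ne_zero_iff.2 hx)).comp_hasFDerivAt x hnorm
  have hinner := ((innerSL ℝ e).hasFDerivAt (x := x)).const_mul 2
  refine ((hnorm.smul_const e).sub ((hinner.mul hinv).smul (hasFDerivAt_id x))).congr_fderiv ?_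
  ext h
  have : ‖x‖ ≠ 0 := norm_ne_zero_iff.2 hx
  simp [real_inner_smul_right]
  match_scalars <;> field_simp
  ring

variable {e : E}

theorem norm_bobylevMap (he : ‖e‖ = 1) (x : E) : ‖bobylevMap e x‖ = ‖x‖ := by
  rcases eq_or_ne x 0 with rfl | hx
  · simp [bobylevMap]
  have hx' : ‖x‖ ≠ 0 := norm_ne_zero_iff.2 hx
  rw [← sq_eq_sq₀ (norm_nonneg _) (norm_nonneg _), bobylevMap, norm_sub_sq_real]
  simp only [norm_smul, real_inner_smul_left, real_inner_smul_right, he, mul_pow, Real.norm_eq_abs,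
    sq_abs, real_inner_comm x e]
  field_simp
  ring

theorem normalize_bobylevMap (he : ‖e‖ = 1) {x : E} (hx : x ≠ 0) :
    ‖bobylevMap e x‖⁻¹ • bobylevMap e x = e - (2 * ⟪e, ‖x‖⁻¹ • x⟫) • ‖x‖⁻¹ • x := by
  have hx' : ‖x‖ ≠ 0 := norm_ne_zero_iff.2 hx
  rw [norm_bobylevMap he, bobylevMap, real_inner_smul_right]
  match_scalars <;> field_simp

theorem injOn_bobylevMap (he : ‖e‖ = 1) : InjOn (bobylevMap e) {x | 0 < ⟪e, x⟫} := by
  intro x (hx : 0 < ⟪e, x⟫) x' (hx' : 0 < ⟪e, x'⟫) hxx'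
  have hnorm : ‖x‖ = ‖x'‖ := by rw [← norm_bobylevMap he x, hxx', norm_bobylevMap he x']
  have hsmul : (2 * ⟪e, x⟫ * ‖x‖⁻¹) • x = (2 * ⟪e, x'⟫ * ‖x'‖⁻¹) • x' := by
    rw [← norm_smul_sub_bobylevMap, ← norm_smul_sub_bobylevMap, hxx', hnorm]
  have hx0 : x ≠ 0 := by rintro rfl; simp at hx
  have hx0' : x' ≠ 0 := by rintro rfl; simp at hx'
  -- the coefficient is recovered from the norm of `‖x‖ • e - bobylevMap e x`
  have hinner : ⟪e, x⟫ = ⟪e, x'⟫ := by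
    have := congrArg norm hsmul
    rw [norm_smul, norm_smul, ← hnorm, Real.norm_of_nonneg (by positivity),
      Real.norm_of_nonneg (by positivity)] at this
    field_simp at this
    linarith
  rw [hinner, hnorm] at hsmul
  exact smul_right_injective E (by positivity) hsmul

theorem setOf_inner_lt_norm_subset_image_bobylevMap (he : ‖e‖ = 1) :
    {y | ⟪e, y⟫ < ‖y‖} ⊆ bobylevMap e '' {x | 0 < ⟪e, x⟫} := by
  intro y (hy : ⟪e, y⟫ < ‖y‖)
  set w := ‖y‖ • e - y
  have hew : ⟪e, w⟫ = ‖y‖ - ⟪e, y⟫ := by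
    simp only [w, inner_sub_right, real_inner_smul_right, real_inner_self_eq_norm_sq, he]
    ring
  have hw2 : ‖w‖ ^ 2 = 2 * ‖y‖ * ⟪e, w⟫ := by
    simp only [w, hew, norm_sub_sq_real, norm_smul, real_inner_smul_left, he, Real.norm_eq_abs,
      abs_norm]
    ring
  have hew0 : 0 < ⟪e, w⟫ := by linarith
  have hw : ‖w‖ ≠ 0 := by rintro h; simp [norm_eq_zero.1 h] at hew0
  have hy0 : ‖y‖ ≠ 0 := by rintro h; simp [norm_eq_zero.1 h] at hy
  have hnorm : ‖(‖y‖ * ‖w‖⁻¹) • w‖ = ‖y‖ := by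
    rw [norm_smul, Real.norm_of_nonneg (by positivity)]
    field_simp
  refine ⟨(‖y‖ * ‖w‖⁻¹) • w, ?_, ?_⟩
  · change 0 < ⟪e, (‖y‖ * ‖w‖⁻¹) • w⟫
    rw [real_inner_smul_right]
    positivity
  · have hcoef : 2 * ⟪e, (‖y‖ * ‖w‖⁻¹) • w⟫ * ‖y‖⁻¹ * (‖y‖ * ‖w‖⁻¹) = 1 := by
      rw [real_inner_smul_right]
      field_simp
      linarith
    rw [bobylevMap, hnorm, smul_smul, hcoef, one_smul, sub_sub_cancel]

theorem addHaar_setOf_norm_le_inner [FiniteDimensional ℝ E] [MeasurableSpace E] [BorelSpace E]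
    (μ : Measure E) [μ.IsAddHaarMeasure] (hE : 1 < Module.finrank ℝ E) (he : ‖e‖ = 1) :
    μ {y | ‖y‖ ≤ ⟪e, y⟫} = 0 := by
  have hspan : Submodule.span ℝ {e} ≠ ⊤ := by
    intro htop
    have := finrank_span_le_card (R := ℝ) ({e} : Set E)
    rw [htop, finrank_top] at this
    simp at this
    omega
  refine measure_mono_null (fun y (hy : ‖y‖ ≤ ⟪e, y⟫) => ?_) (Measure.addHaar_submodule μ _ hspan)
  have hy' : ⟪e, y⟫ = ‖e‖ * ‖y‖ := by
    rw [he, one_mul]; exact le_antisymm (by simpa [he] using real_inner_le_norm e y) hy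
  rw [inner_eq_norm_mul_iff_real, he, one_smul] at hy'
  exact hy' ▸ Submodule.smul_mem _ _ (Submodule.mem_span_singleton_self e)

theorem integral_posPart_inner_normalize_mul [MeasurableSpace E] [OpensMeasurableSpace E]
    (μ : Measure E) (G : E → ℝ) :
    ∫ x, max ⟪e, ‖x‖⁻¹ • x⟫ 0 * G x ∂μ = ∫ x in {x | 0 < ⟪e, x⟫}, ⟪e, ‖x‖⁻¹ • x⟫ * G x ∂μ := by
  rw [← integral_indicator (measurableSet_lt measurable_const (by fun_prop))]
  congr 1 with x
  by_cases hx : 0 < ⟪e, x⟫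
  · rw [indicator_of_mem (show x ∈ {x | 0 < ⟪e, x⟫} from hx),
      max_eq_left (by rw [real_inner_smul_right]; positivity)]
  · rw [indicator_of_notMem (show x ∉ {x | 0 < ⟪e, x⟫} from hx), max_eq_right, zero_mul]
    rw [real_inner_smul_right]
    exact mul_nonpos_of_nonneg_of_nonpos (by positivity) (not_lt.1 hx)

end InnerProductSpace

theorem MeasureTheory.Measure.integral_volumeIoiPow (n : ℕ) (f : ℝ → ℝ) :
    ∫ r, f r ∂Measure.volumeIoiPow n = ∫ r in Ioi (0 : ℝ), r ^ n * f r := by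
  simp only [Measure.volumeIoiPow, ENNReal.ofReal]
  rw [integral_withDensity_eq_integral_smul (measurable_subtype_coe.pow_const _).real_toNNReal,
    integral_subtype_comap measurableSet_Ioi fun r => Real.toNNReal (r ^ n) • f r]
  refine setIntegral_congr_fun measurableSet_Ioi fun r (hr : 0 < r) => ?_
  rw [NNReal.smul_def, Real.coe_toNNReal _ (by positivity), smul_eq_mul]

theorem integral_comp_normalize_mul_fun_norm {E : Type*} [NormedAddCommGroup E]
    [InnerProductSpace ℝ E] [FiniteDimensional ℝ E] [Nontrivial E] [MeasurableSpace E]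
    [BorelSpace E] (μ : Measure E) [μ.IsAddHaarMeasure] (g : E → ℝ) (f : ℝ → ℝ) :
    ∫ x, g (‖x‖⁻¹ • x) * f ‖x‖ ∂μ =
      (∫ σ : sphere (0 : E) 1, g σ ∂μ.toSphere) *
        ∫ r in Ioi (0 : ℝ), r ^ (Module.finrank ℝ E - 1) * f r :=
  calc ∫ x, g (‖x‖⁻¹ • x) * f ‖x‖ ∂μ
      = ∫ x : ({0}ᶜ : Set E), g (‖x.1‖⁻¹ • x.1) * f ‖x.1‖ ∂μ.comap (↑) := by
        rw [integral_subtype_comap (measurableSet_singleton _).compl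
          fun x : E => g (‖x‖⁻¹ • x) * f ‖x‖, restrict_compl_singleton]
    _ = ∫ p : sphere (0 : E) 1 × Ioi (0 : ℝ), g p.1 * f p.2
          ∂μ.toSphere.prod (.volumeIoiPow (Module.finrank ℝ E - 1)) := by
        rw [← μ.measurePreserving_homeomorphUnitSphereProd.integral_comp
          (Homeomorph.measurableEmbedding _)]
        simp only [homeomorphUnitSphereProd_apply_fst_coe, homeomorphUnitSphereProd_apply_snd_coe]
    _ = _ := by
        rw [integral_prod_mul (fun σ : sphere (0 : E) 1 => g σ) (fun r : Ioi (0 : ℝ) => f r),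
          Measure.integral_volumeIoiPow]

theorem integral_pow_mul_exp_neg_Ioi (n : ℕ) :
    ∫ r in Ioi (0 : ℝ), r ^ n * Real.exp (-r) = n.factorial := by
  rw [← Real.Gamma_nat_eq_factorial, Real.Gamma_eq_integral (by positivity)]
  refine setIntegral_congr_fun measurableSet_Ioi fun r _ => ?_
  simp [← Real.rpow_natCast, mul_comm]

open Matrix in
theorem Matrix.det_smul_one_add_vecMulVec_add_vecMulVec {R : Type*} [CommRing R] (a : R)
    (u₁ v₁ u₂ v₂ : Fin 3 → R) :
    (a • 1 + vecMulVec u₁ v₁ + vecMulVec u₂ v₂).det =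
      a ^ 3 + a ^ 2 * (u₁ ⬝ᵥ v₁ + u₂ ⬝ᵥ v₂)
        + a * ((u₁ ⬝ᵥ v₁) * (u₂ ⬝ᵥ v₂) - (u₂ ⬝ᵥ v₁) * (u₁ ⬝ᵥ v₂)) := by
  simp [det_fin_three, vecMulVec_apply, dotProduct, Fin.sum_univ_three]
  ring

open Matrix in
theorem det_smul_id_add_smulRight_add_smulRight (a : ℝ) (u₁ v₁ u₂ v₂ : V) :
    (a • ContinuousLinearMap.id ℝ V + (innerSL ℝ v₁).smulRight u₁
        + (innerSL ℝ v₂).smulRight u₂).det =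
      a ^ 3 + a ^ 2 * (⟪v₁, u₁⟫ + ⟪v₂, u₂⟫)
        + a * (⟪v₁, u₁⟫ * ⟪v₂, u₂⟫ - ⟪v₁, u₂⟫ * ⟪v₂, u₁⟫) := by
  let b := (EuclideanSpace.basisFun (Fin 3) ℝ).toBasis
  have hM : LinearMap.toMatrix b b (a • ContinuousLinearMap.id ℝ V + (innerSL ℝ v₁).smulRight u₁
        + (innerSL ℝ v₂).smulRight u₂ : V →L[ℝ] V) =
      a • 1 + vecMulVec u₁.ofLp v₁.ofLp + vecMulVec u₂.ofLp v₂.ofLp := by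
    ext i j
    simp [b, LinearMap.toMatrix_apply, vecMulVec_apply, one_apply, PiLp.inner_apply]
    ring
  rw [ContinuousLinearMap.det, ← LinearMap.det_toMatrix b, hM, det_smul_one_add_vecMulVec_add_vecMulVec]
  simp only [EuclideanSpace.inner_eq_star_dotProduct, star_trivial]

theorem det_fderiv_bobylevMap {e n : V} (he : ‖e‖ = 1) (hn : ‖n‖ = 1) :
    ((-2 * ⟪e, n⟫) • ContinuousLinearMap.id ℝ V + (innerSL ℝ n).smulRight e
        + (innerSL ℝ (e - ⟪e, n⟫ • n)).smulRight ((-2 : ℝ) • n)).det = -4 * ⟪e, n⟫ := by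
  rw [det_smul_id_add_smulRight_add_smulRight]
  simp only [inner_sub_left, inner_smul_right, real_inner_smul_left, real_inner_self_eq_norm_sq,
    he, hn, real_inner_comm e n]
  ring

theorem integral_eq_setIntegral_bobylevMap {e : V} (he : ‖e‖ = 1) (g : V → ℝ) :
    ∫ y, g y = ∫ x in {x | 0 < ⟪e, x⟫}, (4 * ⟪e, ‖x‖⁻¹ • x⟫) * g (bobylevMap e x) := by
  have hH : MeasurableSet {x : V | 0 < ⟪e, x⟫} := measurableSet_lt measurable_const (by fun_prop)
  have hne : ∀ x ∈ {x : V | 0 < ⟪e, x⟫}, x ≠ 0 := by rintro x hx rfl; simp at hx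
  have hcompl : (bobylevMap e '' {x | 0 < ⟪e, x⟫})ᶜ ⊆ {y | ‖y‖ ≤ ⟪e, y⟫} := fun y hy =>
    (not_lt.1 fun hlt => hy (setOf_inner_lt_norm_subset_image_bobylevMap he hlt) : ‖y‖ ≤ ⟪e, y⟫)
  have himage : ∀ᵐ y, y ∈ bobylevMap e '' {x | 0 < ⟪e, x⟫} :=
    measure_mono_null hcompl (addHaar_setOf_norm_le_inner volume (by simp) he)
  calc ∫ y, g y = ∫ y in bobylevMap e '' {x | 0 < ⟪e, x⟫}, g y := by
        rw [Measure.restrict_eq_self_of_ae_mem himage]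
    _ = _ := integral_image_eq_integral_abs_det_fderiv_smul volume hH
      (fun x hx => (hasFDerivAt_bobylevMap e (hne x hx)).hasFDerivWithinAt)
      (injOn_bobylevMap he) g
    _ = _ := by
      refine setIntegral_congr_fun hH fun x (hx : 0 < ⟪e, x⟫) => ?_
      have hx0 := hne x hx
      have hn : ‖‖x‖⁻¹ • x‖ = 1 := by
        rw [norm_smul, norm_inv, norm_norm, inv_mul_cancel₀ (norm_ne_zero_iff.2 hx0)]
      have hc : 0 < ⟪e, ‖x‖⁻¹ • x⟫ := by rw [real_inner_smul_right]; positivity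
      rw [det_fderiv_bobylevMap he hn, smul_eq_mul, abs_of_neg (by linarith)]
      ring

theorem integral_sphere_max_inner_mul_comp_reflection {e : V} (he : ‖e‖ = 1) (F : V → ℝ) :
    ∫ n : sphere (0:V) 1, max ⟪e, n⟫ 0 * F (e - (2 * ⟪e, n⟫) • n) ∂S2 =
      (1/4) * ∫ σ : sphere (0:V) 1, F σ ∂S2 := by
  obtain ⟨J, hJ, hlift⟩ : ∃ J : ℝ, J ≠ 0 ∧ ∀ g : V → ℝ,
      (∫ σ : sphere (0:V) 1, g σ ∂S2) * J = ∫ x, g (‖x‖⁻¹ • x) * Real.exp (-‖x‖) :=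
    ⟨∫ r in Ioi (0 : ℝ), r ^ (Module.finrank ℝ V - 1) * Real.exp (-r),
      by rw [integral_pow_mul_exp_neg_Ioi]; positivity,
      fun g => (integral_comp_normalize_mul_fun_norm volume g fun r => Real.exp (-r)).symm⟩
  apply mul_right_cancel₀ hJ
  rw [mul_assoc, hlift F, hlift fun y => max ⟪e, y⟫ 0 * F (e - (2 * ⟪e, y⟫) • y)]
  simp only [mul_assoc]
  rw [integral_posPart_inner_normalize_mul,
    integral_eq_setIntegral_bobylevMap he fun y => F (‖y‖⁻¹ • y) * Real.exp (-‖y‖),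
    ← integral_const_mul]
  refine setIntegral_congr_fun (measurableSet_lt measurable_const (by fun_prop)) fun x hx => ?_
  have hx0 : x ≠ 0 := by rintro rfl; simp at hx
  rw [normalize_bobylevMap he hx0, norm_bobylevMap he]
  ring

theorem bobylev_change_of_variables_general (q : V) (hq : q ≠ 0)
    (φ : V → ℝ) :
    (∫ (n : sphere (0:V) 1),
        max ⟪‖q‖⁻¹ • q, (n:V)⟫ 0 * φ (⟪q, (n:V)⟫ • (n:V)) ∂S2)
      = (1/4) * ∫ (σ : sphere (0:V) 1), φ ((2:ℝ)⁻¹ • (q - ‖q‖ • (σ:V))) ∂S2 := by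
  have he : ‖‖q‖⁻¹ • q‖ = 1 := norm_smul_inv_norm hq
  have hq' : ‖q‖ ≠ 0 := norm_ne_zero_iff.2 hq
  refine Eq.trans ?_
    (integral_sphere_max_inner_mul_comp_reflection he fun y => φ ((2:ℝ)⁻¹ • (q - ‖q‖ • y)))
  congr 1 with n
  congr 2
  simp only [real_inner_smul_left, smul_sub, smul_smul]
  match_scalars <;> field_simp
  ring

/-- **Bobylev-type change of variables on the sphere**:
∫_{S²} (q̂·n)₊ φ((q·n)n) dn = (1/4)∫_{S²} φ((q−|q|σ)/2) dσ. -/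
theorem bobylev_change_of_variables (q : V) (hq : q ≠ 0)
    (φ : V → ℝ) (hφ : Continuous φ) :
    (∫ (n : sphere (0:V) 1),
        max ⟪‖q‖⁻¹ • q, (n:V)⟫ 0 * φ (⟪q, (n:V)⟫ • (n:V)) ∂S2)
      = (1/4) * ∫ (σ : sphere (0:V) 1), φ ((2:ℝ)⁻¹ • (q - ‖q‖ • (σ:V))) ∂S2 :=
  bobylev_change_of_variables_general q hq φ
end
end

section
/- Let m,m₁>0, let z,q∈ℝ³, ℓ∈(0,1], and let ω∈ℝ³ with |ω|=1. Define v* = (z + m₁ℓ|q|ω)/(m+m₁) and w* = (z − mℓ|q|ω)/(m+m₁). Then: (i) m|v*|² + m₁|w*|² = ( |z|² + ℓ² m m₁ |q|² )/(m+m₁); and (ii) if z≠0 then, with cos μ = ⟨z,ω⟩/|z|, ( m|v*|² )·( m₁|w*|² ) ≥ ( m m₁/(m+m₁)⁴ ) ( |z|² + ℓ² m m₁ |q|² )² (1 − cos²μ). -/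
open MeasureTheory Real Metric Filter Set
open scoped RealInnerProductSpace Topology ENNReal
noncomputable section

/-- Center-of-mass/relative-velocity estimates: energy identity and lower bound
for the product of post-collisional energies. -/
theorem center_of_mass_estimates (m m₁ : ℝ) (hm : 0 < m) (hm₁ : 0 < m₁)
    (z q : V) (ℓ : ℝ) (hℓ : ℓ ∈ Set.Ioc (0:ℝ) 1) (ω : V) (hω : ‖ω‖ = 1) :
    (m * ‖(m+m₁)⁻¹ • (z + (m₁*ℓ*‖q‖) • ω)‖^2
        + m₁ * ‖(m+m₁)⁻¹ • (z - (m*ℓ*‖q‖) • ω)‖^2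
      = (‖z‖^2 + ℓ^2*m*m₁*‖q‖^2)/(m+m₁))
    ∧ (z ≠ 0 →
        (m * ‖(m+m₁)⁻¹ • (z + (m₁*ℓ*‖q‖) • ω)‖^2)
            * (m₁ * ‖(m+m₁)⁻¹ • (z - (m*ℓ*‖q‖) • ω)‖^2)
          ≥ (m*m₁/(m+m₁)^4) * (‖z‖^2 + ℓ^2*m*m₁*‖q‖^2)^2
              * (1 - (⟪z, ω⟫/‖z‖)^2)) := by
  have hℓ0 := hℓ.1
  have hM : (0:ℝ) < m + m₁ := by linarith
  have h1 : ‖z + (m₁*ℓ*‖q‖) • ω‖^2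
      = ‖z‖^2 + m₁^2*(ℓ*‖q‖)^2 + 2*m₁*(ℓ*‖q‖)*⟪z, ω⟫ := by
    rw [norm_add_sq_real, real_inner_smul_right, norm_smul, hω,
      Real.norm_eq_abs, abs_of_nonneg (by positivity)]
    ring
  have h2 : ‖z - (m*ℓ*‖q‖) • ω‖^2
      = ‖z‖^2 + m^2*(ℓ*‖q‖)^2 - 2*m*(ℓ*‖q‖)*⟪z, ω⟫ := by
    rw [norm_sub_sq_real, real_inner_smul_right, norm_smul, hω,
      Real.norm_eq_abs, abs_of_nonneg (by positivity)]
    ring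
  have hs1 : ‖(m+m₁)⁻¹ • (z + (m₁*ℓ*‖q‖) • ω)‖^2
      = (m+m₁)⁻¹^2 * (‖z‖^2 + m₁^2*(ℓ*‖q‖)^2 + 2*m₁*(ℓ*‖q‖)*⟪z, ω⟫) := by
    rw [norm_smul, Real.norm_eq_abs, abs_of_pos (by positivity), mul_pow, h1]
  have hs2 : ‖(m+m₁)⁻¹ • (z - (m*ℓ*‖q‖) • ω)‖^2
      = (m+m₁)⁻¹^2 * (‖z‖^2 + m^2*(ℓ*‖q‖)^2 - 2*m*(ℓ*‖q‖)*⟪z, ω⟫) := by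
    rw [norm_smul, Real.norm_eq_abs, abs_of_pos (by positivity), mul_pow, h2]
  set a := ‖z‖ with ha
  set c := ℓ*‖q‖ with hc
  set t := ⟪z, ω⟫ with htt
  have haz : z ≠ 0 → 0 < a := fun hz => by rw [ha]; exact norm_pos_iff.mpr hz
  have hq : ℓ^2*m*m₁*‖q‖^2 = m*m₁*c^2 := by rw [hc]; ring
  clear_value a c t
  constructor
  · rw [hs1, hs2, hq]
    field_simp
    ring
  · intro hz
    have ha0 : 0 < a := haz hz
    rw [hs1, hs2, hq, ge_iff_le]
    have hid : m * ((m+m₁)⁻¹^2*(a^2+m₁^2*c^2+2*m₁*c*t))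
          * (m₁*((m+m₁)⁻¹^2*(a^2+m^2*c^2-2*m*c*t)))
        - m*m₁/(m+m₁)^4*(a^2+m*m₁*c^2)^2*(1-(t/a)^2)
        = m*m₁*(a^2*c*(m-m₁)+t*(m*m₁*c^2-a^2))^2/((m+m₁)^4*a^2) := by
      field_simp
      ring
    have hnn : 0 ≤ m*m₁*(a^2*c*(m-m₁)+t*(m*m₁*c^2-a^2))^2/((m+m₁)^4*a^2) := by
      positivity
    linarith [hid, hnn]
end
end

section
/- Let f:ℝ³→[0,∞) be measurable with ∫_{ℝ³}f(v)dv=1 and ∫_{ℝ³}|v|³f(v)dv<∞, and set u=∫_{ℝ³}v f(v)dv. Then ∫_{ℝ³}∫_{ℝ³} f(v) f(w) |v−w|³ dv dw ≥ ( ∫_{ℝ³} |v−u|² f(v) dv )^{3/2}. -/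
open MeasureTheory Real Metric Filter Set
open scoped RealInnerProductSpace Topology ENNReal
noncomputable section

/-! With μ = f dv, the map w ↦ v − w has μ-mean v − u, so Jensen's inequality for the convex
function x ↦ |x|³ gives |v − u|³ ≤ ∫ |v − w|³ dμ(w) for every v. Integrating in v and applying
Jensen once more, to t ↦ t^{3/2} on [0, ∞), gives
(∫ |v − u|² dμ)^{3/2} ≤ ∫ |v − u|³ dμ ≤ ∬ |v − w|³ dμ dμ. -/

section Jensen

variable {α : Type*} [MeasurableSpace α] {μ : Measure α} [IsProbabilityMeasure μ]

theorem rpow_integral_le_integral_rpow {g : α → ℝ} {p : ℝ} (hp : 1 ≤ p)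
    (hg : ∀ᵐ x ∂μ, 0 ≤ g x) (hgi : Integrable g μ) (hgpi : Integrable (fun x => g x ^ p) μ) :
    (∫ x, g x ∂μ) ^ p ≤ ∫ x, g x ^ p ∂μ :=
  (convexOn_rpow hp).map_integral_le (continuousOn_id.rpow_const fun _ _ => Or.inr (by linarith))
    isClosed_Ici hg hgi hgpi

variable {E : Type*} [NormedAddCommGroup E] [NormedSpace ℝ E] [CompleteSpace E]

theorem norm_sub_integral_pow_le_integral_norm_sub_pow {X : α → E} (hX : Integrable X μ) (v : E)
    {n : ℕ} (hn : Integrable (fun x => ‖v - X x‖ ^ n) μ) :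
    ‖v - ∫ x, X x ∂μ‖ ^ n ≤ ∫ x, ‖v - X x‖ ^ n ∂μ := by
  have hconvex : ConvexOn ℝ univ fun y : E => ‖y‖ ^ n :=
    (convexOn_norm convex_univ).pow (fun _ _ => norm_nonneg _) n
  have h := hconvex.map_integral_le (f := fun x => v - X x) (by fun_prop) isClosed_univ
    (ae_of_all _ fun _ => mem_univ _) ((integrable_const v).sub hX) hn
  rwa [integral_sub (integrable_const v) hX, integral_const, probReal_univ, one_smul] at h

end Jensen

section Moments

variable {E : Type*} [NormedAddCommGroup E] [NormedSpace ℝ E] [CompleteSpace E]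
  [MeasurableSpace E] {μ : Measure E} [IsProbabilityMeasure μ]

theorem rpow_integral_norm_sub_integral_sq_le_integral_integral_norm_sub_pow {n : ℕ}
    (hn : 2 ≤ n) (hμ : MemLp id n μ) :
    (∫ v, ‖v - ∫ w, w ∂μ‖ ^ 2 ∂μ) ^ ((n : ℝ) / 2) ≤ ∫ v, ∫ w, ‖v - w‖ ^ n ∂μ ∂μ := by
  set u := ∫ w, w ∂μ
  have hmean : Integrable id μ := hμ.integrable (by exact_mod_cast (by omega : 1 ≤ n))
  have hcenter : MemLp (fun v => v - u) n μ := hμ.sub (memLp_const u)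
  have hcenter2 : MemLp (fun v => v - u) (2 : ℕ) μ :=
    hcenter.mono_exponent (by exact_mod_cast hn)
  have hpair : Integrable (fun p : E × E => ‖p.1 - p.2‖ ^ n) (μ.prod μ) :=
    ((hμ.comp_fst μ).sub (hμ.comp_snd μ)).integrable_norm_pow'
  have hsq_rpow : ∀ v, (‖v - u‖ ^ 2) ^ ((n : ℝ) / 2) = ‖v - u‖ ^ n := fun v => by
    rw [← Real.rpow_natCast, ← Real.rpow_mul (norm_nonneg _), ← Real.rpow_natCast]
    congr 1
    push_cast
    ring
  calc (∫ v, ‖v - u‖ ^ 2 ∂μ) ^ ((n : ℝ) / 2)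
      ≤ ∫ v, (‖v - u‖ ^ 2) ^ ((n : ℝ) / 2) ∂μ :=
        rpow_integral_le_integral_rpow (by rw [le_div_iff₀ two_pos]; exact_mod_cast hn)
          (ae_of_all _ fun _ => sq_nonneg _) hcenter2.integrable_norm_pow'
          (by simpa only [hsq_rpow] using hcenter.integrable_norm_pow')
    _ = ∫ v, ‖v - u‖ ^ n ∂μ := by simp only [hsq_rpow]
    _ ≤ ∫ v, ∫ w, ‖v - w‖ ^ n ∂μ ∂μ :=
        integral_mono hcenter.integrable_norm_pow' hpair.integral_prod_left fun v =>
          norm_sub_integral_pow_le_integral_norm_sub_pow hmean v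
            ((memLp_const v).sub hμ).integrable_norm_pow'

end Moments

section Density

variable {α : Type*} [MeasurableSpace α] {μ : Measure α} {ρ : α → ℝ}
  {E : Type*} [NormedAddCommGroup E] [NormedSpace ℝ E]

theorem integral_withDensity_ofReal (hρ : Measurable ρ) (hρ_nonneg : ∀ x, 0 ≤ ρ x) (g : α → E) :
    ∫ x, g x ∂μ.withDensity (fun x => ENNReal.ofReal (ρ x)) = ∫ x, ρ x • g x ∂μ := by
  simp only [integral_withDensity_eq_integral_toReal_smul hρ.ennreal_ofReal
    (ae_of_all _ fun _ => ENNReal.ofReal_lt_top), ENNReal.toReal_ofReal (hρ_nonneg _)]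

theorem integrable_withDensity_ofReal_iff (hρ : Measurable ρ) (hρ_nonneg : ∀ x, 0 ≤ ρ x)
    {g : α → E} :
    Integrable g (μ.withDensity fun x => ENNReal.ofReal (ρ x)) ↔
      Integrable (fun x => ρ x • g x) μ := by
  simp only [integrable_withDensity_iff_integrable_smul' hρ.ennreal_ofReal
    (ae_of_all _ fun _ => ENNReal.ofReal_lt_top), ENNReal.toReal_ofReal (hρ_nonneg _)]

theorem isProbabilityMeasure_withDensity_ofReal (hρ_nonneg : ∀ x, 0 ≤ ρ x)
    (hρ_mass : ∫ x, ρ x ∂μ = 1) :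
    IsProbabilityMeasure (μ.withDensity fun x => ENNReal.ofReal (ρ x)) := by
  have hρ_int : Integrable ρ μ := Integrable.of_integral_ne_zero (by simp [hρ_mass])
  constructor
  rw [withDensity_apply _ MeasurableSet.univ, Measure.restrict_univ,
    ← ofReal_integral_eq_lintegral_ofReal hρ_int (ae_of_all _ hρ_nonneg), hρ_mass,
    ENNReal.ofReal_one]

end Density

theorem jensen_third_moment_general (f : V → ℝ) (hfmeas : Measurable f)
    (hfpos : ∀ v, 0 ≤ f v) (hfmass : (∫ v : V, f v) = 1)
    (hf3 : Integrable (fun v : V => ‖v‖^3 * f v)) :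
    (∫ v : V, ∫ w : V, f v * f w * ‖v - w‖^3)
      ≥ (∫ v : V, ‖v - (∫ w : V, f w • w)‖^2 * f v)^((3:ℝ)/2) := by
  set μ := (volume : Measure V).withDensity fun v => ENNReal.ofReal (f v)
  have : IsProbabilityMeasure μ := isProbabilityMeasure_withDensity_ofReal hfpos hfmass
  have hmoment : MemLp id (3 : ℕ) μ := by
    refine (integrable_norm_rpow_iff aestronglyMeasurable_id (by norm_num) (by simp)).1 ?_
    simpa only [μ, integrable_withDensity_ofReal_iff hfmeas hfpos, ENNReal.toReal_natCast,
      Real.rpow_natCast, id, smul_eq_mul, mul_comm] using hf3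
  have key :=
    rpow_integral_norm_sub_integral_sq_le_integral_integral_norm_sub_pow (by norm_num) hmoment
  simp only [μ, integral_withDensity_ofReal hfmeas hfpos, smul_eq_mul, ← integral_const_mul,
    ← mul_assoc, mul_comm (f _) (_ ^ 2), Nat.cast_ofNat] at key
  exact key

/-- Jensen-type lower bound: for a probability density f with finite third moment
and bulk velocity u, ∬ f(v)f(w)|v−w|³ dv dw ≥ (∫ |v−u|² f(v) dv)^{3/2}. -/
theorem jensen_third_moment (f : V → ℝ) (hfmeas : Measurable f)
    (hfpos : ∀ v, 0 ≤ f v) (hfint : Integrable f) (hfmass : (∫ v : V, f v) = 1)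
    (hf3 : Integrable (fun v : V => ‖v‖^3 * f v)) :
    (∫ v : V, ∫ w : V, f v * f w * ‖v - w‖^3)
      ≥ (∫ v : V, ‖v - (∫ w : V, f w • w)‖^2 * f v)^((3:ℝ)/2) :=
  jensen_third_moment_general f hfmeas hfpos hfmass hf3
end
end

section
/- (Lower bound on the collision frequency.) Let F₁:ℝ³→[0,∞) be measurable with ∫_{ℝ³}F₁(v)dv=1, ∫_{ℝ³}|v|²F₁(v)dv<∞, and finite entropy ∫_{ℝ³}F₁(v) log F₁(v) dv < ∞. Then there exists χ>0 such that for all v∈ℝ³: ∫_{ℝ³} |v−w| F₁(w) dw ≥ χ √(1+|v|²). -/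
open MeasureTheory Real Metric Filter Set
open scoped RealInnerProductSpace Topology ENNReal
noncomputable section

/-! The potential `g v = ∫ |v - w| F₁(w) dw` is 1-Lipschitz, since `w ↦ |v - w|` is 1-Lipschitz in `v`
and `F₁` has unit mass, and it is strictly positive, since `F₁` cannot be concentrated on the single
point `v`. By the triangle inequality `g v ≥ |v| - ∫ |w| F₁`, so `g` grows linearly at infinity, while
on a large closed ball it is bounded below by its positive minimum. -/

section NormSubPotential

variable {E : Type*} [NormedAddCommGroup E] [MeasurableSpace E] [OpensMeasurableSpace E]
  {μ : Measure E} {f : E → ℝ}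

theorem integrable_norm_mul_of_integrable_sq_norm_mul (hf : 0 ≤ f) (hint : Integrable f μ)
    (hmom : Integrable (fun w => ‖w‖ ^ 2 * f w) μ) : Integrable (fun w => ‖w‖ * f w) μ := by
  refine (hint.add hmom).mono'
    (continuous_norm.aestronglyMeasurable.mul hint.aestronglyMeasurable) (ae_of_all _ fun w => ?_)
  rw [Real.norm_of_nonneg (mul_nonneg (norm_nonneg w) (hf w)), Pi.add_apply]
  nlinarith [hf w, mul_nonneg (hf w) (sq_nonneg (‖w‖ - 1)), mul_nonneg (hf w) (norm_nonneg w)]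

theorem integrable_norm_sub_mul (hf : 0 ≤ f) (hint : Integrable f μ)
    (hmom : Integrable (fun w => ‖w‖ * f w) μ) (v : E) :
    Integrable (fun w => ‖v - w‖ * f w) μ := by
  refine ((hint.const_mul ‖v‖).add hmom).mono'
    ((continuous_const.sub continuous_id).norm.aestronglyMeasurable.mul hint.aestronglyMeasurable)
    (ae_of_all _ fun w => ?_)
  rw [Real.norm_of_nonneg (mul_nonneg (norm_nonneg _) (hf w)), Pi.add_apply, ← add_mul]
  exact mul_le_mul_of_nonneg_right (norm_sub_le v w) (hf w)

theorem lipschitzWith_integral_norm_sub_mul (hf : 0 ≤ f) (hint : Integrable f μ)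
    (hmom : Integrable (fun w => ‖w‖ * f w) μ) (hmass : ∫ w, f w ∂μ = 1) :
    LipschitzWith 1 fun v => ∫ w, ‖v - w‖ * f w ∂μ := by
  have hint_sub := integrable_norm_sub_mul hf hint hmom
  refine LipschitzWith.of_dist_le_mul fun a b => ?_
  rw [NNReal.coe_one, one_mul, Real.dist_eq, ← Real.norm_eq_abs, dist_eq_norm,
    ← integral_sub (hint_sub a) (hint_sub b)]
  calc ‖∫ w, (‖a - w‖ * f w - ‖b - w‖ * f w) ∂μ‖ ≤ ∫ w, ‖a - b‖ * f w ∂μ := by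
        refine norm_integral_le_of_norm_le (hint.const_mul _) (ae_of_all _ fun w => ?_)
        rw [← sub_mul, norm_mul, Real.norm_of_nonneg (hf w), Real.norm_eq_abs]
        refine mul_le_mul_of_nonneg_right ?_ (hf w)
        simpa only [sub_sub_sub_cancel_right] using abs_norm_sub_norm_le (a - w) (b - w)
    _ = ‖a - b‖ := by rw [integral_const_mul, hmass, mul_one]

theorem norm_sub_integral_norm_mul_le (hf : 0 ≤ f) (hint : Integrable f μ)
    (hmom : Integrable (fun w => ‖w‖ * f w) μ) (hmass : ∫ w, f w ∂μ = 1) (v : E) :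
    ‖v‖ - ∫ w, ‖w‖ * f w ∂μ ≤ ∫ w, ‖v - w‖ * f w ∂μ := by
  calc ‖v‖ - ∫ w, ‖w‖ * f w ∂μ = ∫ w, (‖v‖ * f w - ‖w‖ * f w) ∂μ := by
        rw [integral_sub (hint.const_mul _) hmom, integral_const_mul, hmass, mul_one]
    _ ≤ ∫ w, ‖v - w‖ * f w ∂μ := by
        refine integral_mono ((hint.const_mul _).sub hmom)
          (integrable_norm_sub_mul hf hint hmom v) fun w => ?_
        rw [← sub_mul]
        exact mul_le_mul_of_nonneg_right (norm_sub_norm_le v w) (hf w)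

theorem integral_norm_sub_mul_pos [NullSingletonClass μ] (hf : 0 ≤ f) (hint : Integrable f μ)
    (hmom : Integrable (fun w => ‖w‖ * f w) μ) (hmass : ∫ w, f w ∂μ ≠ 0) (v : E) :
    0 < ∫ w, ‖v - w‖ * f w ∂μ := by
  have hnonneg : 0 ≤ fun w => ‖v - w‖ * f w := fun w => mul_nonneg (norm_nonneg _) (hf w)
  refine (integral_nonneg hnonneg).lt_of_ne fun h => hmass (integral_eq_zero_of_ae ?_)
  have hzero := (integral_eq_zero_iff_of_nonneg hnonneg
    (integrable_norm_sub_mul hf hint hmom v)).mp h.symm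
  filter_upwards [hzero, measure_eq_zero_iff_ae_notMem.mp (measure_singleton v)] with w hw hwv
  exact (mul_eq_zero.mp hw).resolve_left (norm_ne_zero_iff.mpr (sub_ne_zero.mpr (Ne.symm hwv)))

end NormSubPotential

theorem exists_pos_mul_sqrt_one_add_sq_le {E : Type*} [NormedAddCommGroup E] [ProperSpace E]
    {g : E → ℝ} (hc : Continuous g) (hpos : ∀ v, 0 < g v) {M : ℝ} (hM : 0 ≤ M)
    (hg : ∀ v, ‖v‖ - M ≤ g v) :
    ∃ χ : ℝ, 0 < χ ∧ ∀ v, χ * Real.sqrt (1 + ‖v‖ ^ 2) ≤ g v := by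
  set R := 2 * M + 1
  obtain ⟨v₀, -, hv₀⟩ := (isCompact_closedBall (0 : E) R).exists_isMinOn
    ⟨0, mem_closedBall_self (by positivity)⟩ hc.continuousOn
  refine ⟨min (1 / 2) (g v₀ / (1 + R)),
    lt_min (by norm_num) (div_pos (hpos v₀) (by positivity)), fun v => ?_⟩
  have hsqrt : Real.sqrt (1 + ‖v‖ ^ 2) ≤ 1 + ‖v‖ :=
    Real.sqrt_le_iff.mpr ⟨by positivity, by nlinarith [norm_nonneg v]⟩
  rcases le_or_gt ‖v‖ R with hv | hv
  · calc min (1 / 2) (g v₀ / (1 + R)) * Real.sqrt (1 + ‖v‖ ^ 2)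
          ≤ g v₀ / (1 + R) * (1 + R) :=
          mul_le_mul (min_le_right _ _) (hsqrt.trans (by linarith)) (Real.sqrt_nonneg _)
            (div_nonneg (hpos v₀).le (by positivity))
      _ = g v₀ := div_mul_cancel₀ _ (by positivity)
      _ ≤ g v := hv₀ (mem_closedBall_zero_iff.mpr hv)
  · calc min (1 / 2) (g v₀ / (1 + R)) * Real.sqrt (1 + ‖v‖ ^ 2) ≤ 1 / 2 * (1 + ‖v‖) :=
          mul_le_mul (min_le_left _ _) hsqrt (Real.sqrt_nonneg _) (by norm_num)
      _ ≤ ‖v‖ - M := by linarith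
      _ ≤ g v := hg v

theorem collision_frequency_lower_bound_general (F1 : V → ℝ)
    (hpos : ∀ v, 0 ≤ F1 v) (hint : Integrable F1) (hmass : (∫ v : V, F1 v) = 1)
    (hmom : Integrable (fun v : V => ‖v‖^2 * F1 v)) :
    ∃ χ : ℝ, 0 < χ ∧ ∀ v : V,
      χ * Real.sqrt (1 + ‖v‖^2) ≤ ∫ w : V, ‖v - w‖ * F1 w := by
  have hmom₁ := integrable_norm_mul_of_integrable_sq_norm_mul hpos hint hmom
  exact exists_pos_mul_sqrt_one_add_sq_le
    (lipschitzWith_integral_norm_sub_mul hpos hint hmom₁ hmass).continuous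
    (integral_norm_sub_mul_pos hpos hint hmom₁ (hmass ▸ one_ne_zero))
    (integral_nonneg fun w => mul_nonneg (norm_nonneg w) (hpos w))
    (norm_sub_integral_norm_mul_le hpos hint hmom₁ hmass)

/-- **Lower bound on the collision frequency**: a probability density F₁ with
finite second moment and finite entropy satisfies
∫ |v−w| F₁(w) dw ≥ χ √(1+|v|²) for some χ > 0 and all v. -/
theorem collision_frequency_lower_bound (F1 : V → ℝ) (hmeas : Measurable F1)
    (hpos : ∀ v, 0 ≤ F1 v) (hint : Integrable F1) (hmass : (∫ v : V, F1 v) = 1)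
    (hmom : Integrable (fun v : V => ‖v‖^2 * F1 v))
    (hent : (∫⁻ v : V, ENNReal.ofReal (F1 v * Real.log (F1 v))) < ⊤) :
    ∃ χ : ℝ, 0 < χ ∧ ∀ v : V,
      χ * Real.sqrt (1 + ‖v‖^2) ≤ ∫ w : V, ‖v - w‖ * F1 w :=
  collision_frequency_lower_bound_general F1 hpos hint hmass hmom
end
end
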